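/- arXiv:2509.17341 — 2 statements merged into one kernel-verified Lean document; each statement's English description precedes it below -/
import Mathlib

section
/- Under the deviated-pursuit engagement kinematics (r' = V_T cos(γ_T − θ) − V_P cos δ, r·θ' = V_T sin(γ_T − θ) − V_P sin δ, γ_P' = a/V_P, δ = γ_P − θ, constants V_T, γ_T, V_P ≠ 0, V_P² ≠ V_T²), let s : ℝ → ℝ be any function, let α, β ∈ ℝ, let t_e > 0 and let h be the scaling function associated with t_e. If on an interval I ⊆ (0, t_e) one has r > 0, cos δ ≠ 0, V_θ ≠ 0, and the command a(t) = V_P·θ'(t) + [V_P·(V_P² − V_T²)·cos² δ(t)/(r(t)·V_θ(t))]·(α − β·h'(t)/h(t))·s(t) is applied, then the deviated-pursuit time-to-go t_go = r·(V_r + 2 V_P cos δ − V_θ tan δ)/(V_P² − V_T²) satisfies t_go'(t) = −1 + (−α + β·h'(t)/h(t))·s(t) for all t ∈ I. -/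
/-- The prescribed-time scaling function associated with `te`:
`h(t) = (te/π)·sin(πt/te) + t − te` for `t < te` and `h(t) = 1` for `t ≥ te`. -/
noncomputable def scalingFn (te t : ℝ) : ℝ :=
  if t < te then (te / Real.pi) * Real.sin (Real.pi * t / te) + t - te else 1

/-- Deviation (lead) angle `δ = γ_P − θ`. -/
noncomputable def devAngle (θ γP : ℝ → ℝ) (t : ℝ) : ℝ := γP t - θ t

/-- Relative velocity component along the line of sight (constant pursuer speed). -/
noncomputable def Vrad (VT γT VP : ℝ) (θ γP : ℝ → ℝ) (t : ℝ) : ℝ :=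
  VT * Real.cos (γT - θ t) - VP * Real.cos (devAngle θ γP t)

/-- Relative velocity component across the line of sight (constant pursuer speed). -/
noncomputable def Vlos (VT γT VP : ℝ) (θ γP : ℝ → ℝ) (t : ℝ) : ℝ :=
  VT * Real.sin (γT - θ t) - VP * Real.sin (devAngle θ γP t)

/-- Deviated-pursuit time-to-go
`t_go = r (V_r + 2 V_P cos δ − V_θ tan δ)/(V_P² − V_T²)`. -/
noncomputable def tgoDP (VT γT VP : ℝ) (r θ γP : ℝ → ℝ) (t : ℝ) : ℝ :=
  r t * (Vrad VT γT VP θ γP t + 2 * VP * Real.cos (devAngle θ γP t)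
      - Vlos VT γT VP θ γP t * Real.tan (devAngle θ γP t)) / (VP ^ 2 - VT ^ 2)


/-! With `Q = V_r + 2 V_P cos δ − V_θ tan δ` one has `∂Q/∂δ = −V_θ / cos² δ`, while the
contribution of `θ'` (through `r' = V_r` and `r θ' = V_θ`) collapses, by `sin² + cos² = 1`, so that
`(r Q)' = −(V_P² − V_T²) − r V_θ δ' / cos² δ` for every pursuer turn rate. The command is exactly
the turn rate giving `δ' = (V_P² − V_T²) cos² δ (α − β h'/h) s / (r V_θ)`, whence
`t_go' = −1 − (α − β h'/h) s`. -/

section Kinematics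

open Real

variable {VT γT VP : ℝ} {r θ γP : ℝ → ℝ} {t θd γd : ℝ}

theorem hasDerivAt_devAngle (hθ : HasDerivAt θ θd t) (hγ : HasDerivAt γP γd t) :
    HasDerivAt (devAngle θ γP) (γd - θd) t :=
  hγ.sub hθ

theorem hasDerivAt_Vrad (hθ : HasDerivAt θ θd t) (hγ : HasDerivAt γP γd t) :
    HasDerivAt (Vrad VT γT VP θ γP)
      (VT * sin (γT - θ t) * θd + VP * sin (devAngle θ γP t) * (γd - θd)) t := by
  have := ((hθ.const_sub γT).cos.const_mul VT).sub
    ((hasDerivAt_devAngle hθ hγ).cos.const_mul VP)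
  exact this.congr_deriv (by ring)

theorem hasDerivAt_Vlos (hθ : HasDerivAt θ θd t) (hγ : HasDerivAt γP γd t) :
    HasDerivAt (Vlos VT γT VP θ γP)
      (-(VT * cos (γT - θ t) * θd) - VP * cos (devAngle θ γP t) * (γd - θd)) t := by
  have := ((hθ.const_sub γT).sin.const_mul VT).sub
    ((hasDerivAt_devAngle hθ hγ).sin.const_mul VP)
  exact this.congr_deriv (by ring)

theorem hasDerivAt_tgoDP (hr : HasDerivAt r (Vrad VT γT VP θ γP t) t)
    (hθ : HasDerivAt θ θd t) (hθd : r t * θd = Vlos VT γT VP θ γP t)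
    (hγ : HasDerivAt γP γd t) (hcos : cos (devAngle θ γP t) ≠ 0) :
    HasDerivAt (tgoDP VT γT VP r θ γP)
      ((-(VP ^ 2 - VT ^ 2) - r t * Vlos VT γT VP θ γP t * (γd - θd) / cos (devAngle θ γP t) ^ 2)
        / (VP ^ 2 - VT ^ 2)) t := by
  have hδ := hasDerivAt_devAngle hθ hγ
  have htan : HasDerivAt (fun u => tan (devAngle θ γP u))
      (1 / cos (devAngle θ γP t) ^ 2 * (γd - θd)) t :=
    (hasDerivAt_tan hcos).comp t hδ
  have hQ : HasDerivAt (fun u => Vrad VT γT VP θ γP u + 2 * VP * cos (devAngle θ γP u)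
      - Vlos VT γT VP θ γP u * tan (devAngle θ γP u)) _ t :=
    ((hasDerivAt_Vrad hθ hγ).add (hδ.cos.const_mul (2 * VP))).sub
      ((hasDerivAt_Vlos hθ hγ).mul htan)
  refine ((hr.mul hQ).div_const _).congr_deriv ?_
  congr 1
  simp only [Vrad, Vlos, tan_eq_sin_div_cos] at hθd ⊢
  set δ := devAngle θ γP t
  set φ := γT - θ t
  field_simp
  linear_combination VT * cos δ * (sin φ * cos δ + cos φ * sin δ) * hθd
    + cos δ ^ 2 * (VT ^ 2 * sin_sq_add_cos_sq φ - VP ^ 2 * sin_sq_add_cos_sq δ)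

end Kinematics

theorem tgoDP_closed_loop_general
    (VT γT VP : ℝ) (hVP : VP ≠ 0) (hV2 : VP ^ 2 ≠ VT ^ 2)
    (α β te : ℝ)
    (s : ℝ → ℝ) (I : Set ℝ)
    (r θ γP a θd : ℝ → ℝ)
    (hr : ∀ t ∈ I, HasDerivAt r (Vrad VT γT VP θ γP t) t)
    (hθ : ∀ t ∈ I, HasDerivAt θ (θd t) t)
    (hθd : ∀ t ∈ I, r t * θd t = Vlos VT γT VP θ γP t)
    (hγ : ∀ t ∈ I, HasDerivAt γP (a t / VP) t)
    (hrpos : ∀ t ∈ I, 0 < r t)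
    (hcos : ∀ t ∈ I, Real.cos (devAngle θ γP t) ≠ 0)
    (hVθ : ∀ t ∈ I, Vlos VT γT VP θ γP t ≠ 0)
    (hcmd : ∀ t ∈ I,
      a t = VP * θd t
        + (VP * (VP ^ 2 - VT ^ 2) * Real.cos (devAngle θ γP t) ^ 2
            / (r t * Vlos VT γT VP θ γP t))
          * (α - β * ((Real.cos (Real.pi * t / te) + 1) / scalingFn te t)) * s t) :
    ∀ t ∈ I, HasDerivAt (tgoDP VT γT VP r θ γP)
      (-1 + (-α + β * ((Real.cos (Real.pi * t / te) + 1) / scalingFn te t)) * s t) t := by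
  intro t ht
  set u := (α - β * ((Real.cos (Real.pi * t / te) + 1) / scalingFn te t)) * s t
  have hrate : a t / VP - θd t = (VP ^ 2 - VT ^ 2) * Real.cos (devAngle θ γP t) ^ 2
      / (r t * Vlos VT γT VP θ γP t) * u := by
    rw [hcmd t ht]
    field_simp
    ring
  have hr_ne := (hrpos t ht).ne'
  have hK_ne := sub_ne_zero.mpr hV2
  have hcos_ne := hcos t ht
  have hVθ_ne := hVθ t ht
  refine (hasDerivAt_tgoDP (hr t ht) (hθ t ht) (hθd t ht) (hγ t ht) hcos_ne).congr_deriv ?_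
  rw [hrate]
  field_simp
  ring

/-- Corollary 1 of the paper: under the proposed
deviated-pursuit cooperative command, the time-to-go error dynamics reduce to
`t_go' = −1 + (−α + β h'/h) s`. -/
theorem tgoDP_closed_loop
    (VT γT VP : ℝ) (hVP : VP ≠ 0) (hV2 : VP ^ 2 ≠ VT ^ 2)
    (α β te : ℝ) (hte : 0 < te)
    (s : ℝ → ℝ) (I : Set ℝ) (hI : I ⊆ Set.Ioo 0 te)
    (r θ γP a θd : ℝ → ℝ)
    (hr : ∀ t ∈ I, HasDerivAt r (Vrad VT γT VP θ γP t) t)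
    (hθ : ∀ t ∈ I, HasDerivAt θ (θd t) t)
    (hθd : ∀ t ∈ I, r t * θd t = Vlos VT γT VP θ γP t)
    (hγ : ∀ t ∈ I, HasDerivAt γP (a t / VP) t)
    (hrpos : ∀ t ∈ I, 0 < r t)
    (hcos : ∀ t ∈ I, Real.cos (devAngle θ γP t) ≠ 0)
    (hVθ : ∀ t ∈ I, Vlos VT γT VP θ γP t ≠ 0)
    (hcmd : ∀ t ∈ I,
      a t = VP * θd t
        + (VP * (VP ^ 2 - VT ^ 2) * Real.cos (devAngle θ γP t) ^ 2
            / (r t * Vlos VT γT VP θ γP t))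
          * (α - β * ((Real.cos (Real.pi * t / te) + 1) / scalingFn te t)) * s t) :
    ∀ t ∈ I, HasDerivAt (tgoDP VT γT VP r θ γP)
      (-1 + (-α + β * ((Real.cos (Real.pi * t / te) + 1) / scalingFn te t)) * s t) t :=
  tgoDP_closed_loop_general VT γT VP hVP hV2 α β te s I r θ γP a θd hr hθ hθd hγ hrpos hcos hVθ hcmd
end

section
/- Let t_e > 0, let h be the scaling function associated with t_e, let b > 0, and let V : ℝ → ℝ be nonnegative, continuous on [0, t_e) and differentiable on (0, t_e) with V'(t) ≤ −b·V(t) + 2·(h'(t)/h(t))·V(t) for all t ∈ (0, t_e), where h'(t) = cos(πt/t_e) + 1. Then V(t) ≤ (h(t)²/t_e²)·exp(−b·t)·V(0) for all t ∈ [0, t_e), and consequently V(t) → 0 as t → t_e⁻. -/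
/-!
With `φ(t) = h(t)² e^{-bt}`, the differential inequality, multiplied by `φ(t) > 0`, says exactly
`V' φ ≤ V φ'`, i.e. `V / φ` is nonincreasing on `[0, t_e)`. Hence `V(t) ≤ φ(t)/φ(0) · V(0)`
with `φ(0) = t_e²`, and since `h(t) → 0` as `t → t_e⁻`, the bound squeezes `V` to zero.
-/

open Filter Topology

open Real Set

theorem antitoneOn_div_of_deriv_mul_le_mul_deriv {D : Set ℝ} (hD : Convex ℝ D)
    {f f' g g' : ℝ → ℝ} (hf : ContinuousOn f D) (hg : ContinuousOn g D)
    (hg₀ : ∀ x ∈ D, g x ≠ 0)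
    (hf' : ∀ x ∈ interior D, HasDerivAt f (f' x) x)
    (hg' : ∀ x ∈ interior D, HasDerivAt g (g' x) x)
    (hle : ∀ x ∈ interior D, f' x * g x ≤ f x * g' x) :
    AntitoneOn (fun x => f x / g x) D := by
  refine antitoneOn_of_hasDerivWithinAt_nonpos hD (hf.div hg hg₀)
    (fun x hx => ((hf' x hx).div (hg' x hx) (hg₀ x (interior_subset hx))).hasDerivWithinAt)
    fun x hx => div_nonpos_of_nonpos_of_nonneg ?_ (sq_nonneg _)
  linarith [hle x hx]

theorem le_div_mul_of_deriv_mul_le_mul_deriv {D : Set ℝ} (hD : Convex ℝ D)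
    {f f' g g' : ℝ → ℝ} (hf : ContinuousOn f D) (hg : ContinuousOn g D)
    (hg₀ : ∀ x ∈ D, 0 < g x)
    (hf' : ∀ x ∈ interior D, HasDerivAt f (f' x) x)
    (hg' : ∀ x ∈ interior D, HasDerivAt g (g' x) x)
    (hle : ∀ x ∈ interior D, f' x * g x ≤ f x * g' x)
    {a t : ℝ} (ha : a ∈ D) (ht : t ∈ D) (hat : a ≤ t) :
    f t ≤ g t / g a * f a := by
  have hdiv := antitoneOn_div_of_deriv_mul_le_mul_deriv hD hf hg (fun x hx => (hg₀ x hx).ne')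
    hf' hg' hle ha ht hat
  rw [div_le_div_iff₀ (hg₀ t ht) (hg₀ a ha)] at hdiv
  rw [div_mul_eq_mul_div, le_div_iff₀ (hg₀ a ha)]
  linarith

section scalingFn

variable {te t : ℝ}

theorem scalingFn_of_lt (h : t < te) :
    scalingFn te t = (te / π) * sin (π * t / te) + t - te := if_pos h

theorem scalingFn_zero (hte : 0 < te) : scalingFn te 0 = -te := by
  simp [scalingFn_of_lt hte]

theorem scalingFn_lt_zero (hte : 0 < te) (ht : t ∈ Ico 0 te) : scalingFn te t < 0 := by
  -- `sin (π t / te) = sin (π (te - t) / te) < π (te - t) / te`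
  have hs : 0 < π * (te - t) / te := by have := ht.2; have := pi_pos; positivity
  have hsin := sin_lt hs
  rw [mul_sub, sub_div, mul_div_cancel_right₀ _ hte.ne', sin_pi_sub] at hsin
  have hscaled := mul_lt_mul_of_pos_left hsin (div_pos hte pi_pos)
  rw [scalingFn_of_lt ht.2]
  field_simp at hscaled ⊢
  linarith

theorem hasDerivAt_scalingFn (hte : 0 < te) (ht : t < te) :
    HasDerivAt (scalingFn te) (cos (π * t / te) + 1) t := by
  have hlin : HasDerivAt (fun u => π * u / te) (π / te) t := by
    simpa using ((hasDerivAt_id t).const_mul π).div_const te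
  have hformula := ((hlin.sin.const_mul (te / π)).add (hasDerivAt_id t)).sub_const te
  refine (hformula.congr_deriv ?_).congr_of_eventuallyEq ?_
  · field_simp
  · filter_upwards [Iio_mem_nhds ht] with u hu using scalingFn_of_lt hu

theorem tendsto_scalingFn_nhdsLT (hte : 0 < te) : Tendsto (scalingFn te) (𝓝[<] te) (𝓝 0) := by
  have hcont : Continuous fun u => (te / π) * sin (π * u / te) + u - te := by fun_prop
  have hlim := hcont.continuousWithinAt (s := Iio te) (x := te)
  rw [ContinuousWithinAt, mul_div_cancel_right₀ _ hte.ne', sin_pi] at hlim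
  simp only [mul_zero, zero_add, sub_self] at hlim
  exact hlim.congr' (eventually_nhdsWithin_of_forall fun u hu => (scalingFn_of_lt hu).symm)

end scalingFn

theorem prescribed_time_lyapunov_decay_general
    (te : ℝ) (hte : 0 < te) (b : ℝ)
    (V Vd : ℝ → ℝ)
    (hVnn : ∀ t ∈ Set.Ico (0 : ℝ) te, 0 ≤ V t)
    (hVcont : ContinuousOn V (Set.Ico 0 te))
    (hVder : ∀ t ∈ Set.Ioo (0 : ℝ) te, HasDerivAt V (Vd t) t)
    (hineq : ∀ t ∈ Set.Ioo (0 : ℝ) te,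
      Vd t ≤ -b * V t + 2 * ((Real.cos (Real.pi * t / te) + 1) / scalingFn te t) * V t) :
    (∀ t ∈ Set.Ico (0 : ℝ) te,
      V t ≤ (scalingFn te t) ^ 2 / te ^ 2 * Real.exp (-b * t) * V 0) ∧
    Tendsto V (nhdsWithin te (Set.Iio te)) (nhds 0) := by
  set φ : ℝ → ℝ := fun u => scalingFn te u ^ 2 * exp (-b * u)
  have hφ' : ∀ t < te, HasDerivAt φ (2 * scalingFn te t ^ 1 * (cos (π * t / te) + 1) *
      exp (-b * t) + scalingFn te t ^ 2 * (exp (-b * t) * -b)) t := fun t ht =>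
    ((hasDerivAt_scalingFn hte ht).pow 2).mul
      (by simpa using ((hasDerivAt_id t).const_mul (-b)).exp)
  have hφpos : ∀ t ∈ Ico 0 te, 0 < φ t := fun t ht =>
    mul_pos (sq_pos_of_neg (scalingFn_lt_zero hte ht)) (exp_pos _)
  have hkey : ∀ t ∈ Ioo 0 te, Vd t * φ t ≤ V t * (2 * scalingFn te t ^ 1 *
      (cos (π * t / te) + 1) * exp (-b * t) + scalingFn te t ^ 2 * (exp (-b * t) * -b)) := by
    intro t ht
    have hh := (scalingFn_lt_zero hte (Ioo_subset_Ico_self ht)).ne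
    calc Vd t * φ t
        ≤ (-b * V t + 2 * ((cos (π * t / te) + 1) / scalingFn te t) * V t) * φ t :=
          mul_le_mul_of_nonneg_right (hineq t ht) (hφpos t (Ioo_subset_Ico_self ht)).le
      _ = _ := by simp only [φ]; field_simp; ring
  have hbound : ∀ t ∈ Ico (0 : ℝ) te,
      V t ≤ (scalingFn te t) ^ 2 / te ^ 2 * exp (-b * t) * V 0 := by
    intro t ht
    have hcmp := le_div_mul_of_deriv_mul_le_mul_deriv (convex_Ico 0 te) hVcont
      (fun u hu => (hφ' u hu.2).continuousAt.continuousWithinAt) hφpos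
      (by rwa [interior_Ico]) (by rw [interior_Ico]; exact fun u hu => hφ' u hu.2)
      (by rwa [interior_Ico])
      ⟨le_rfl, hte⟩ ht ht.1
    simpa [φ, scalingFn_zero hte, mul_div_right_comm] using hcmp
  have hlim : Tendsto (fun t => scalingFn te t ^ 2 / te ^ 2 * exp (-b * t) * V 0)
      (𝓝[<] te) (𝓝 0) := by
    have hexp : ContinuousWithinAt (fun u => exp (-b * u)) (Iio te) te := by fun_prop
    simpa using ((((tendsto_scalingFn_nhdsLT hte).pow 2).div_const (te ^ 2)).mul
      hexp).mul_const (V 0)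
  refine ⟨hbound, squeeze_zero' ?_ ?_ hlim⟩
  · filter_upwards [Ioo_mem_nhdsLT hte] with u hu using hVnn u (Ioo_subset_Ico_self hu)
  · filter_upwards [Ioo_mem_nhdsLT hte] with u hu using hbound u (Ioo_subset_Ico_self hu)

/-- the Lyapunov comparison lemma specialized to `μ = 1/h`
(equations (14)–(15) of the paper): if `V' ≤ −bV + 2(h'/h)V` on `(0, te)`, then
`V(t) ≤ (h(t)²/te²) exp(−bt) V(0)` on `[0, te)`, and `V(t) → 0` as `t → te⁻`. -/
theorem prescribed_time_lyapunov_decay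
    (te : ℝ) (hte : 0 < te) (b : ℝ) (hb : 0 < b)
    (V Vd : ℝ → ℝ)
    (hVnn : ∀ t ∈ Set.Ico (0 : ℝ) te, 0 ≤ V t)
    (hVcont : ContinuousOn V (Set.Ico 0 te))
    (hVder : ∀ t ∈ Set.Ioo (0 : ℝ) te, HasDerivAt V (Vd t) t)
    (hineq : ∀ t ∈ Set.Ioo (0 : ℝ) te,
      Vd t ≤ -b * V t + 2 * ((Real.cos (Real.pi * t / te) + 1) / scalingFn te t) * V t) :
    (∀ t ∈ Set.Ico (0 : ℝ) te,
      V t ≤ (scalingFn te t) ^ 2 / te ^ 2 * Real.exp (-b * t) * V 0) ∧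
    Tendsto V (nhdsWithin te (Set.Iio te)) (nhds 0) :=
  prescribed_time_lyapunov_decay_general te hte b V Vd hVnn hVcont hVder hineq
end
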